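/- For every c > 0 there exists a constant c' > 0, depending only on c, with the following property: for every n ≥ 2, if U_1, …, U_n are independent random variables each uniformly distributed on [0,1] and Û_n := n⁻¹ ∑_{i=1}^n δ_{U_i} is their empirical distribution, then with probability at least 1 − n^{−c} one has Δ_CDF(Û_n, Unif[0,1]) ≤ c' · √(log n / n). -/

import Mathlib

open MeasureTheory
open scoped ENNReal

noncomputable section

/-- The mean `μ_P` of a measure on `ℝ`. -/
def meanR (P : Measure ℝ) : ℝ := ∫ x, x ∂P

/-- `ε_P = ∫ |x − μ_P| dP` for a measure on `ℝ`. -/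
def epsR (P : Measure ℝ) : ℝ := ∫ x, |x - meanR P| ∂P

/-- Membership in `𝒫₁`: Borel probability measures on `ℝ` with finite first
moment that are not a point mass. -/
def MemP1 (P : Measure ℝ) : Prop :=
  IsProbabilityMeasure P ∧ Integrable (fun x : ℝ => |x|) P ∧ ∀ x : ℝ, P {x} < 1

/-- Membership in `ℱ₁`, the upper semi-continuous log-concave densities on `ℝ`. -/
def MemF1 (f : ℝ → ℝ) : Prop :=
  UpperSemicontinuous f ∧ (∀ x, 0 ≤ f x) ∧ (∫ x, f x = 1) ∧
    ∀ x y t : ℝ, 0 ≤ t → t ≤ 1 → f x ^ (1 - t) * f y ^ t ≤ f ((1 - t) * x + t * y)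

/-- Positive part of `log t` in `ℝ≥0∞` (with `log 0 = −∞` having positive part 0). -/
def logPosPart (t : ℝ) : ℝ≥0∞ := ENNReal.ofReal (Real.log t)

/-- Negative part of `log t` in `ℝ≥0∞`, with `log 0 = −∞`. -/
def logNegPart (t : ℝ) : ℝ≥0∞ := if t = 0 then ⊤ else ENNReal.ofReal (-(Real.log t))

/-- The integral `∫ log f dP`, valued in `[−∞,∞]`. -/
def eLogInt1 (P : Measure ℝ) (f : ℝ → ℝ) : EReal :=
  ((∫⁻ x, logPosPart (f x) ∂P : ℝ≥0∞) : EReal) - ((∫⁻ x, logNegPart (f x) ∂P : ℝ≥0∞) : EReal)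

/-- `f` is a log-concave projection of `P` (on `ℝ`). -/
def IsLCP1 (P : Measure ℝ) (f : ℝ → ℝ) : Prop :=
  MemF1 f ∧ ∀ g : ℝ → ℝ, MemF1 g → eLogInt1 P g ≤ eLogInt1 P f

/-- Squared Hellinger distance between densities on `ℝ`. -/
def dH2R (f g : ℝ → ℝ) : ℝ := ∫ x, (Real.sqrt (f x) - Real.sqrt (g x)) ^ 2

/-- The CDF-type discrepancy `Δ_CDF(P,Q)`. -/
def DeltaCDF (P Q : Measure ℝ) : ℝ :=
  max (⨆ t : ℝ, |Real.sqrt (P (Set.Ioi t)).toReal - Real.sqrt (Q (Set.Ioi t)).toReal|)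
      (⨆ t : ℝ, |Real.sqrt (P (Set.Iio t)).toReal - Real.sqrt (Q (Set.Iio t)).toReal|)

/-- The uniform distribution on `[0,1]`. -/
def unif01 : Measure ℝ := volume.restrict (Set.Icc (0 : ℝ) 1)

/-- The empirical distribution of the points `U 0, …, U (n−1)` in `ℝ`. -/
def empDistR (n : ℕ) (U : Fin n → ℝ) : Measure ℝ :=
  ((n : ℝ≥0∞))⁻¹ • ∑ i : Fin n, Measure.dirac (U i)

open Real

lemma sqrt_add_le (x y : ℝ) (hx : 0 ≤ x) (hy : 0 ≤ y) :
    Real.sqrt (x + y) ≤ Real.sqrt x + Real.sqrt y := by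
  rw [show x + y = Real.sqrt x ^ 2 + Real.sqrt y ^ 2 by rw [Real.sq_sqrt hx, Real.sq_sqrt hy]]
  have h1 := Real.sqrt_nonneg x
  have h2 := Real.sqrt_nonneg y
  rw [show Real.sqrt x ^ 2 + Real.sqrt y ^ 2 =
    (Real.sqrt x + Real.sqrt y) ^ 2 - 2 * (Real.sqrt x * Real.sqrt y) by ring]
  calc Real.sqrt ((Real.sqrt x + Real.sqrt y) ^ 2 - 2 * (Real.sqrt x * Real.sqrt y))
      ≤ Real.sqrt ((Real.sqrt x + Real.sqrt y) ^ 2) := by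
        apply Real.sqrt_le_sqrt; nlinarith
    _ = Real.sqrt x + Real.sqrt y := Real.sqrt_sq (by positivity)

/-- Lemma A -/
lemma sqrt_dev {a p M : ℝ} (ha : 0 ≤ a) (hp : 0 ≤ p) (hM : 0 < M)
    (h : |a - p| ≤ Real.sqrt (M * p) + M) : |Real.sqrt a - Real.sqrt p| ≤ 2 * Real.sqrt M := by
  have hsa := Real.sqrt_nonneg a
  have hsp := Real.sqrt_nonneg p
  have hsM := Real.sqrt_nonneg M
  have hMM : Real.sqrt M * Real.sqrt M = M := Real.mul_self_sqrt hM.le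
  rcases le_or_gt p M with hpM | hpM
  · -- p ≤ M : both sqrt a, sqrt p ≤ 2√M
    have hMp : Real.sqrt (M * p) ≤ M := by
      calc Real.sqrt (M * p) ≤ Real.sqrt (M * M) := by
            apply Real.sqrt_le_sqrt; nlinarith
        _ = M := Real.sqrt_mul_self hM.le
    have haM : a ≤ 3 * M := by
      have := abs_le.mp h
      nlinarith
    have h1 : Real.sqrt a ≤ 2 * Real.sqrt M := by
      calc Real.sqrt a ≤ Real.sqrt (4 * M) := Real.sqrt_le_sqrt (by linarith)
        _ = 2 * Real.sqrt M := by
            rw [show (4:ℝ) * M = 2^2 * M by ring, Real.sqrt_mul (by norm_num), Real.sqrt_sq (by norm_num)]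
    have h2 : Real.sqrt p ≤ Real.sqrt M := Real.sqrt_le_sqrt hpM
    rw [abs_le]; constructor <;> nlinarith
  · -- p > M
    have hp0 : 0 < p := lt_of_le_of_lt hM.le hpM
    have hsp0 : 0 < Real.sqrt p := Real.sqrt_pos.mpr hp0
    have hpp : Real.sqrt p * Real.sqrt p = p := Real.mul_self_sqrt hp0.le
    have haa : Real.sqrt a * Real.sqrt a = a := Real.mul_self_sqrt ha
    have key : |Real.sqrt a - Real.sqrt p| * Real.sqrt p ≤ |a - p| := by
      have heq : |Real.sqrt a - Real.sqrt p| * (Real.sqrt a + Real.sqrt p) = |a - p| := by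
        rw [← abs_of_nonneg (show (0:ℝ) ≤ Real.sqrt a + Real.sqrt p by positivity), ← abs_mul]
        congr 1
        nlinarith
      calc |Real.sqrt a - Real.sqrt p| * Real.sqrt p
          ≤ |Real.sqrt a - Real.sqrt p| * (Real.sqrt a + Real.sqrt p) := by
            apply mul_le_mul_of_nonneg_left (by linarith) (abs_nonneg _)
        _ = |a - p| := heq
    have hMp : Real.sqrt (M * p) = Real.sqrt M * Real.sqrt p := Real.sqrt_mul hM.le p
    have hMsp : M ≤ Real.sqrt M * Real.sqrt p := by
      have hsq : Real.sqrt M ≤ Real.sqrt p := Real.sqrt_le_sqrt hpM.le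
      nlinarith
    have hkey2 : |Real.sqrt a - Real.sqrt p| * Real.sqrt p ≤
        (2 * Real.sqrt M) * Real.sqrt p := by
      calc |Real.sqrt a - Real.sqrt p| * Real.sqrt p ≤ |a - p| := key
        _ ≤ Real.sqrt (M * p) + M := h
        _ ≤ Real.sqrt M * Real.sqrt p + Real.sqrt M * Real.sqrt p := by rw [hMp]; linarith
        _ = (2 * Real.sqrt M) * Real.sqrt p := by ring
    exact le_of_mul_le_mul_right hkey2 hsp0

lemma exp_le_quad {x : ℝ} (h0 : 0 ≤ x) (h1 : x ≤ 1) : Real.exp x ≤ 1 + x + x ^ 2 := by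
  have hb := Real.exp_bound (x := x) (by rw [abs_of_nonneg h0]; exact h1) (n := 3) (by norm_num)
  have hc : |x| ^ 3 * ((((3:ℕ).succ : ℝ)) / (((3:ℕ).factorial : ℝ) * ((3:ℕ) : ℝ))) = x^3 * (2/9) := by
    rw [abs_of_nonneg h0, show ((3:ℕ).factorial : ℝ) = 6 by norm_num [Nat.factorial]]
    norm_num
  rw [hc] at hb
  have hs : ∑ m ∈ Finset.range 3, x ^ m / ↑(m.factorial) = 1 + x + x^2/2 := by
    rw [Finset.sum_range_succ, Finset.sum_range_succ, Finset.sum_range_succ, Finset.sum_range_zero]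
    norm_num [Nat.factorial]
  rw [hs] at hb
  have := abs_le.mp hb
  nlinarith [pow_le_pow_left₀ h0 h1 3, pow_le_pow_left₀ h0 h1 2]

lemma exp_neg_le_quad {x : ℝ} (h0 : 0 ≤ x) : Real.exp (-x) ≤ 1 - x + x ^ 2 := by
  have h1x : (0:ℝ) < 1 + x := by linarith
  have he' : (1 + x) ≤ Real.exp x := by have := Real.add_one_le_exp x; linarith
  rw [Real.exp_neg]
  have hinv : (Real.exp x)⁻¹ ≤ (1 + x)⁻¹ := by
    apply inv_anti₀ h1x he'
  calc (Real.exp x)⁻¹ ≤ (1+x)⁻¹ := hinv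
    _ ≤ 1 - x + x ^ 2 := by
      rw [inv_le_iff_one_le_mul₀ h1x]
      nlinarith



instance : IsProbabilityMeasure unif01 := by
  constructor
  rw [unif01, Measure.restrict_apply MeasurableSet.univ, Set.univ_inter, Real.volume_Icc]
  norm_num

lemma unif01_Ioi (t : ℝ) : unif01 (Set.Ioi t) = ENNReal.ofReal (min 1 (1 - t)) := by
  rw [unif01, Measure.restrict_apply measurableSet_Ioi]
  rcases lt_or_ge t 0 with ht | ht
  · have : Set.Ioi t ∩ Set.Icc (0:ℝ) 1 = Set.Icc 0 1 := by
      apply Set.inter_eq_self_of_subset_right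
      intro x hx; exact lt_of_lt_of_le ht hx.1
    rw [this, Real.volume_Icc]
    congr 1
    rw [min_eq_left (by linarith)]; norm_num
  · have : Set.Ioi t ∩ Set.Icc (0:ℝ) 1 = Set.Ioc t 1 := by
      ext x; simp only [Set.mem_inter_iff, Set.mem_Ioi, Set.mem_Icc, Set.mem_Ioc]
      constructor
      · rintro ⟨h1, _, h3⟩; exact ⟨h1, h3⟩
      · rintro ⟨h1, h2⟩; exact ⟨h1, le_trans ht h1.le, h2⟩
    rw [this, Real.volume_Ioc]
    congr 1
    rw [min_eq_right (by linarith)]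

lemma unif01_Iio (t : ℝ) : unif01 (Set.Iio t) = ENNReal.ofReal (min 1 t) := by
  rw [unif01, Measure.restrict_apply measurableSet_Iio]
  rcases le_or_gt t 1 with ht | ht
  · have : Set.Iio t ∩ Set.Icc (0:ℝ) 1 = Set.Ico 0 t := by
      ext x; simp only [Set.mem_inter_iff, Set.mem_Iio, Set.mem_Icc, Set.mem_Ico]
      constructor
      · rintro ⟨h1, h2, _⟩; exact ⟨h2, h1⟩
      · rintro ⟨h1, h2⟩; exact ⟨h2, h1, le_trans h2.le ht⟩
    rw [this, Real.volume_Ico]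
    congr 1
    rw [min_eq_right ht]; ring
  · have : Set.Iio t ∩ Set.Icc (0:ℝ) 1 = Set.Icc 0 1 := by
      apply Set.inter_eq_self_of_subset_right
      intro x hx; exact lt_of_le_of_lt hx.2 ht
    rw [this, Real.volume_Icc]
    congr 1
    rw [min_eq_left ht.le]; norm_num

lemma empDistR_apply {n : ℕ} (hn : 0 < n) (V : Fin n → ℝ) {s : Set ℝ} (hs : MeasurableSet s) :
    ((empDistR n V) s).toReal = (∑ i : Fin n, s.indicator (fun _ => (1:ℝ)) (V i)) / n := by
  rw [empDistR, Measure.smul_apply, Measure.coe_finset_sum, Finset.sum_apply, smul_eq_mul,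
    ENNReal.toReal_mul]
  have hterm : ∀ i : Fin n, Measure.dirac (V i) s = s.indicator 1 (V i) := fun i =>
    Measure.dirac_apply' (V i) hs
  have hfin : (∑ i : Fin n, Measure.dirac (V i) s) ≠ ⊤ := by
    rw [Finset.sum_congr rfl (fun i _ => hterm i)]
    apply ne_of_lt
    calc ∑ i : Fin n, s.indicator (1 : ℝ → ℝ≥0∞) (V i) ≤ ∑ _i : Fin n, 1 := by
          apply Finset.sum_le_sum; intro i _
          exact Set.indicator_le_self' (fun _ _ => zero_le_one) (V i) |>.trans (by
            by_cases h : V i ∈ s <;> simp [h])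
      _ < ⊤ := by simp
  have htne : ∀ i : Fin n, Measure.dirac (V i) s ≠ ⊤ := by
    intro i; rw [hterm i]
    by_cases h : V i ∈ s <;> simp [h]
  rw [ENNReal.toReal_sum (fun i _ => htne i)]
  have : ∀ i : Fin n, (Measure.dirac (V i) s).toReal = s.indicator (fun _ => (1:ℝ)) (V i) := by
    intro i; rw [hterm i]
    by_cases h : V i ∈ s <;> simp [h]
  rw [Finset.sum_congr rfl (fun i _ => this i)]
  rw [ENNReal.toReal_inv, ENNReal.toReal_natCast]
  ring

open ProbabilityTheory in
noncomputable section

open ProbabilityTheory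
variable {Ω : Type} [MeasurableSpace Ω] {μ : Measure Ω} [IsProbabilityMeasure μ]
variable {n : ℕ} {U : Fin n → Ω → ℝ}

/-- mgf of a single indicator variable. -/
lemma mgf_indicator {A : Set ℝ} (hA : MeasurableSet A) (i : Fin n) (hU : Measurable (U i))
    (lam : ℝ) :
    mgf (fun ω => A.indicator (fun _ => (1:ℝ)) (U i ω)) μ lam =
      1 + (μ (U i ⁻¹' A)).toReal * (Real.exp lam - 1) := by
  have hfun : (fun ω => Real.exp (lam * A.indicator (fun _ => (1:ℝ)) (U i ω)))
      = fun ω => (U i ⁻¹' A).indicator (fun _ => Real.exp lam - 1) ω + 1 := by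
    funext ω
    by_cases h : U i ω ∈ A
    · simp [Set.indicator_of_mem, h, Set.mem_preimage.mpr h,
        Set.indicator_of_mem (Set.mem_preimage.mpr h)]
    · have h' : ω ∉ U i ⁻¹' A := fun hh => h hh
      simp [Set.indicator_of_notMem h, Set.indicator_of_notMem h']
  rw [mgf, hfun]
  rw [integral_add]
  · rw [MeasureTheory.integral_indicator_const _ (hU hA), integral_const]
    simp [measure_univ]
    simp only [Measure.real]
    ring
  · exact (integrable_const _).indicator (hU hA)
  · exact integrable_const _

lemma integrable_exp_indicator {A : Set ℝ} (hA : MeasurableSet A) (i : Fin n)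
    (hU : Measurable (U i)) (lam : ℝ) :
    Integrable (fun ω => Real.exp (lam * A.indicator (fun _ => (1:ℝ)) (U i ω))) μ := by
  have hfun : (fun ω => Real.exp (lam * A.indicator (fun _ => (1:ℝ)) (U i ω)))
      = fun ω => (U i ⁻¹' A).indicator (fun _ => Real.exp lam - 1) ω + 1 := by
    funext ω
    by_cases h : U i ω ∈ A
    · simp [Set.indicator_of_mem, h, Set.mem_preimage.mpr h,
        Set.indicator_of_mem (Set.mem_preimage.mpr h)]
    · have h' : ω ∉ U i ⁻¹' A := fun hh => h hh
      simp [Set.indicator_of_notMem h, Set.indicator_of_notMem h']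
  rw [hfun]
  exact ((integrable_const _).indicator (hU hA)).add (integrable_const _)

/-- mgf of the sum of iid indicators. -/
lemma mgf_sum_indicator {A : Set ℝ} (hA : MeasurableSet A)
    (hUm : ∀ i, Measurable (U i))
    (hind : iIndepFun U μ)
    (p : ℝ) (hp : ∀ i, (μ (U i ⁻¹' A)).toReal = p) (lam : ℝ) :
    mgf (∑ i : Fin n, fun ω => A.indicator (fun _ => (1:ℝ)) (U i ω)) μ lam =
      (1 + p * (Real.exp lam - 1)) ^ n := by
  have hX : ∀ i : Fin n, Measurable (fun ω => A.indicator (fun _ => (1:ℝ)) (U i ω)) := by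
    intro i
    exact (Measurable.indicator measurable_const hA).comp (hUm i)
  have hindX : iIndepFun
      (fun i => (fun x => A.indicator (fun _ => (1:ℝ)) x) ∘ U i) μ :=
    hind.comp _ (fun i => Measurable.indicator measurable_const hA)
  have := hindX.mgf_sum (t := lam) (fun i => hX i) Finset.univ
  rw [show (∑ i ∈ Finset.univ, (fun x => A.indicator (fun _ => (1:ℝ)) x) ∘ U i)
      = (∑ i : Fin n, fun ω => A.indicator (fun _ => (1:ℝ)) (U i ω)) from rfl] at this
  rw [this]
  have : ∀ i : Fin n, mgf ((fun x => A.indicator (fun _ => (1:ℝ)) x) ∘ U i) μ lam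
      = 1 + p * (Real.exp lam - 1) := by
    intro i
    have := mgf_indicator (μ := μ) hA i (hUm i) lam
    rw [show ((fun x => A.indicator (fun _ => (1:ℝ)) x) ∘ U i)
        = (fun ω => A.indicator (fun _ => (1:ℝ)) (U i ω)) from rfl, this, hp i]
  rw [Finset.prod_congr rfl (fun i _ => this i), Finset.prod_const, Finset.card_univ,
    Fintype.card_fin]

lemma chernoff_upper {A : Set ℝ} (hA : MeasurableSet A)
    (hUm : ∀ i, Measurable (U i))
    (hind : iIndepFun U μ)
    {p : ℝ} (hp : ∀ i, (μ (U i ⁻¹' A)).toReal = p) (hp0 : 0 ≤ p) (hp1 : p ≤ 1)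
    {lam D : ℝ} (hl0 : 0 ≤ lam) (hl1 : lam ≤ 1) :
    (μ {ω | (n:ℝ) * (p + D) ≤ ∑ i : Fin n, A.indicator (fun _ => (1:ℝ)) (U i ω)}).toReal
      ≤ Real.exp ((n:ℝ) * p * lam ^ 2 - lam * n * D) := by
  have hX : ∀ i : Fin n, Measurable (fun ω => A.indicator (fun _ => (1:ℝ)) (U i ω)) := fun i =>
    (Measurable.indicator measurable_const hA).comp (hUm i)
  have hindX : iIndepFun
      (fun i => (fun x => A.indicator (fun _ => (1:ℝ)) x) ∘ U i) μ :=
    hind.comp _ (fun i => Measurable.indicator measurable_const hA)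
  have hint : Integrable (fun ω =>
      Real.exp (lam * (∑ i : Fin n, fun ω' => A.indicator (fun _ => (1:ℝ)) (U i ω')) ω)) μ :=
    hindX.integrable_exp_mul_sum (fun i => hX i)
      (fun i _ => integrable_exp_indicator hA i (hUm i) lam)
  have hch := measure_ge_le_exp_mul_mgf (μ := μ)
    (X := ∑ i : Fin n, fun ω => A.indicator (fun _ => (1:ℝ)) (U i ω))
    ((n:ℝ) * (p + D)) hl0 hint
  have hmgf := mgf_sum_indicator hA hUm hind p hp lam
  rw [hmgf] at hch
  have hSeq : ∀ ω : Ω, (∑ i : Fin n, fun ω' => A.indicator (fun _ => (1:ℝ)) (U i ω')) ω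
      = ∑ i : Fin n, A.indicator (fun _ => (1:ℝ)) (U i ω) := by
    intro ω; simp [Finset.sum_apply]
  have hset : {ω | (n:ℝ) * (p + D) ≤ (∑ i : Fin n, fun ω' => A.indicator (fun _ => (1:ℝ)) (U i ω')) ω}
      = {ω | (n:ℝ) * (p + D) ≤ ∑ i : Fin n, A.indicator (fun _ => (1:ℝ)) (U i ω)} := by
    ext ω; rw [Set.mem_setOf_eq, Set.mem_setOf_eq, hSeq ω]
  rw [hset] at hch
  refine hch.trans ?_
  have hbase : 0 ≤ 1 + p * (Real.exp lam - 1) := by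
    have := Real.exp_pos lam
    nlinarith
  have hb2 : 1 + p * (Real.exp lam - 1) ≤ Real.exp (p * (Real.exp lam - 1)) := by
    have := Real.add_one_le_exp (p * (Real.exp lam - 1)); linarith
  calc Real.exp (-lam * ((n:ℝ) * (p + D))) * (1 + p * (Real.exp lam - 1)) ^ n
      ≤ Real.exp (-lam * ((n:ℝ) * (p + D))) * Real.exp (p * (Real.exp lam - 1)) ^ n := by
        apply mul_le_mul_of_nonneg_left _ (Real.exp_nonneg _)
        exact pow_le_pow_left₀ hbase hb2 n
    _ = Real.exp (-lam * ((n:ℝ) * (p + D)) + (n:ℝ) * (p * (Real.exp lam - 1))) := by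
        rw [← Real.exp_nat_mul, ← Real.exp_add]
    _ ≤ Real.exp ((n:ℝ) * p * lam ^ 2 - lam * n * D) := by
        apply Real.exp_le_exp.mpr
        have hq : Real.exp lam - 1 - lam ≤ lam ^ 2 := by
          have := exp_le_quad hl0 hl1; linarith
        have hn0 : (0:ℝ) ≤ (n:ℝ) := Nat.cast_nonneg n
        nlinarith [mul_nonneg hn0 hp0]

lemma chernoff_lower {A : Set ℝ} (hA : MeasurableSet A)
    (hUm : ∀ i, Measurable (U i))
    (hind : iIndepFun U μ)
    {p : ℝ} (hp : ∀ i, (μ (U i ⁻¹' A)).toReal = p) (hp0 : 0 ≤ p) (hp1 : p ≤ 1)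
    {lam D : ℝ} (hl0 : 0 ≤ lam) :
    (μ {ω | (∑ i : Fin n, A.indicator (fun _ => (1:ℝ)) (U i ω) : ℝ) ≤ (n:ℝ) * (p - D)}).toReal
      ≤ Real.exp ((n:ℝ) * p * lam ^ 2 - lam * n * D) := by
  have hX : ∀ i : Fin n, Measurable (fun ω => A.indicator (fun _ => (1:ℝ)) (U i ω)) := fun i =>
    (Measurable.indicator measurable_const hA).comp (hUm i)
  have hindX : iIndepFun
      (fun i => (fun x => A.indicator (fun _ => (1:ℝ)) x) ∘ U i) μ :=
    hind.comp _ (fun i => Measurable.indicator measurable_const hA)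
  have hint : Integrable (fun ω =>
      Real.exp ((-lam) * (∑ i : Fin n, fun ω' => A.indicator (fun _ => (1:ℝ)) (U i ω')) ω)) μ :=
    hindX.integrable_exp_mul_sum (fun i => hX i)
      (fun i _ => integrable_exp_indicator hA i (hUm i) (-lam))
  have hch := measure_le_le_exp_mul_mgf (μ := μ) (t := -lam)
    (X := ∑ i : Fin n, fun ω => A.indicator (fun _ => (1:ℝ)) (U i ω))
    ((n:ℝ) * (p - D)) (neg_nonpos_of_nonneg hl0) hint
  have hmgf := mgf_sum_indicator hA hUm hind p hp (-lam)
  rw [hmgf] at hch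
  have hSeq : ∀ ω : Ω, (∑ i : Fin n, fun ω' => A.indicator (fun _ => (1:ℝ)) (U i ω')) ω
      = ∑ i : Fin n, A.indicator (fun _ => (1:ℝ)) (U i ω) := by
    intro ω; simp [Finset.sum_apply]
  have hset : {ω | (∑ i : Fin n, fun ω' => A.indicator (fun _ => (1:ℝ)) (U i ω')) ω ≤ (n:ℝ) * (p - D)}
      = {ω | (∑ i : Fin n, A.indicator (fun _ => (1:ℝ)) (U i ω) : ℝ) ≤ (n:ℝ) * (p - D)} := by
    ext ω; rw [Set.mem_setOf_eq, Set.mem_setOf_eq, hSeq ω]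
  rw [hset] at hch
  refine hch.trans ?_
  have hbase : 0 ≤ 1 + p * (Real.exp (-lam) - 1) := by
    have := Real.exp_pos (-lam)
    nlinarith
  have hb2 : 1 + p * (Real.exp (-lam) - 1) ≤ Real.exp (p * (Real.exp (-lam) - 1)) := by
    have := Real.add_one_le_exp (p * (Real.exp (-lam) - 1)); linarith
  calc Real.exp (-(-lam) * ((n:ℝ) * (p - D))) * (1 + p * (Real.exp (-lam) - 1)) ^ n
      ≤ Real.exp (lam * ((n:ℝ) * (p - D))) * Real.exp (p * (Real.exp (-lam) - 1)) ^ n := by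
        rw [neg_neg]
        apply mul_le_mul_of_nonneg_left _ (Real.exp_nonneg _)
        exact pow_le_pow_left₀ hbase hb2 n
    _ = Real.exp (lam * ((n:ℝ) * (p - D)) + (n:ℝ) * (p * (Real.exp (-lam) - 1))) := by
        rw [← Real.exp_nat_mul, ← Real.exp_add]
    _ ≤ Real.exp ((n:ℝ) * p * lam ^ 2 - lam * n * D) := by
        apply Real.exp_le_exp.mpr
        have hq : Real.exp (-lam) - 1 + lam ≤ lam ^ 2 := by
          have := exp_neg_le_quad hl0; linarith
        have hn0 : (0:ℝ) ≤ (n:ℝ) := Nat.cast_nonneg n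
        nlinarith [mul_nonneg hn0 hp0]

end

lemma choose_lam (n : ℕ) {K L p : ℝ} (hL : 0 < L) (hK : 1 ≤ K) (hp0 : 0 ≤ p) (hp1 : p ≤ 1) :
    ∃ lam : ℝ, 0 ≤ lam ∧ lam ≤ 1 ∧
      (n:ℝ) * p * lam ^ 2 - lam * n * (Real.sqrt (K * p * L) + K * L)
        ≤ -(K / 8) * ((n:ℝ) * L) := by
  have hn0 : (0:ℝ) ≤ n := Nat.cast_nonneg n
  have hKL : 0 < K * L := by positivity
  rcases le_or_gt p (K * L / 4) with hcase | hcase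
  · refine ⟨1, by norm_num, le_refl 1, ?_⟩
    have hs : 0 ≤ Real.sqrt (K * p * L) := Real.sqrt_nonneg _
    have h1 : (n:ℝ) * p ≤ (n:ℝ) * (K * L / 4) := by
      apply mul_le_mul_of_nonneg_left hcase hn0
    nlinarith [mul_nonneg hn0 hs, mul_nonneg hn0 hKL.le]
  · have hp0' : 0 < p := lt_trans (by positivity) hcase
    refine ⟨Real.sqrt (K * L / p) / 2, by positivity, ?_, ?_⟩
    · have : K * L / p < 4 := by
        rw [div_lt_iff₀ hp0']; nlinarith
      have := Real.sqrt_lt_sqrt (by positivity) this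
      rw [show Real.sqrt 4 = 2 by rw [show (4:ℝ) = 2^2 by norm_num, Real.sqrt_sq (by norm_num)]] at this
      linarith
    · have hsq : (Real.sqrt (K * L / p) / 2) ^ 2 = K * L / p / 4 := by
        rw [div_pow, Real.sq_sqrt (by positivity)]
        norm_num
      have hprod : Real.sqrt (K * L / p) * Real.sqrt (K * p * L) = K * L := by
        rw [← Real.sqrt_mul (by positivity)]
        rw [show K * L / p * (K * p * L) = (K*L)^2 * (p/p) by ring, div_self hp0'.ne',
          mul_one, Real.sqrt_sq hKL.le]
      have hlamnn : 0 ≤ Real.sqrt (K * L / p) / 2 := by positivity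
      have e1 : (n:ℝ) * p * (Real.sqrt (K * L / p) / 2) ^ 2 = (n:ℝ) * (K * L) / 4 := by
        rw [hsq]; field_simp
      have e2 : (Real.sqrt (K * L / p) / 2) * n * Real.sqrt (K * p * L) = (n:ℝ) * (K * L) / 2 := by
        rw [show (Real.sqrt (K * L / p) / 2) * n * Real.sqrt (K * p * L)
            = (n:ℝ) * (Real.sqrt (K * L / p) * Real.sqrt (K * p * L)) / 2 by ring, hprod]
      have e3 : 0 ≤ (Real.sqrt (K * L / p) / 2) * n * (K * L) := by positivity
      nlinarith [e1, e2, e3, mul_nonneg hn0 hKL.le]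

noncomputable def clampIoi (t : ℝ) : ℝ := min 1 (max 0 (1 - t))

lemma clampIoi_mem (t : ℝ) : 0 ≤ clampIoi t ∧ clampIoi t ≤ 1 := by
  constructor
  · apply le_min (by norm_num) (le_max_left 0 _ |>.trans (le_refl _)) |>.trans (le_refl _) |>.trans (le_refl _)
  · exact min_le_left _ _

lemma clampIoi_of_mem {t : ℝ} (h0 : 0 ≤ t) (h1 : t ≤ 1) : clampIoi t = 1 - t := by
  rw [clampIoi, max_eq_right (by linarith), min_eq_right (by linarith)]

set_option maxHeartbeats 1000000 in
/-- Lemma B : deterministic interpolation from the grid to all reals. -/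
lemma lemB {n : ℕ} (hn : 2 ≤ n) {K L : ℝ} (hK : 4 ≤ K) (hL : 0 < L)
    (h1n : 1 / (n:ℝ) ≤ 2 * L)
    (G : ℝ → ℝ) (hGanti : ∀ s t : ℝ, s ≤ t → G t ≤ G s)
    (hG0 : ∀ t, 0 ≤ G t) (hG1 : ∀ t, G t ≤ 1)
    (hgrid : ∀ k : ℕ, k ≤ n →
      |G ((k:ℝ)/n) - clampIoi ((k:ℝ)/n)| ≤ Real.sqrt (K * clampIoi ((k:ℝ)/n) * L) + K * L)
    (t : ℝ) :
    |Real.sqrt (G t) - Real.sqrt (clampIoi t)| ≤ 4 * Real.sqrt (K * L) := by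
  have hn0 : (0:ℝ) < n := by positivity
  have hKL : 0 < K * L := by positivity
  have h2LKL : 2 * L ≤ K * L := by nlinarith [mul_nonneg (by linarith : (0:ℝ) ≤ K - 2) hL.le]
  set M := 4 * (K * L) with hM
  have hM0 : 0 < M := by positivity
  have key : |G t - clampIoi t| ≤ Real.sqrt (M * clampIoi t) + M := by
    rcases lt_or_ge t 0 with ht | ht
    · -- t < 0 : clampIoi t = 1
      have hct : clampIoi t = 1 := by
        rw [clampIoi, max_eq_right (by linarith), min_eq_left (by linarith)]
      have hg0 := hgrid 0 (by omega)
      rw [show ((0:ℕ):ℝ)/(n:ℝ) = 0 by norm_num] at hg0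
      rw [show clampIoi 0 = 1 by norm_num [clampIoi]] at hg0
      have hmono : G 0 ≤ G t := hGanti t 0 ht.le
      have h1 : |G t - clampIoi t| = 1 - G t := by
        rw [hct, abs_of_nonpos (by linarith [hG1 t])]; ring
      have h2 : 1 - G t ≤ 1 - G 0 := by linarith
      have h3 : 1 - G 0 ≤ Real.sqrt (K * 1 * L) + K * L := by
        have := abs_le.mp hg0; linarith [this.1]
      have h4 : Real.sqrt (K * 1 * L) ≤ Real.sqrt (M * clampIoi t) := by
        apply Real.sqrt_le_sqrt
        rw [hct, hM]; nlinarith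
      have h5 : K * L ≤ M := by rw [hM]; nlinarith
      linarith
    rcases le_or_gt 1 t with ht1 | ht1
    · -- t ≥ 1 : clampIoi t = 0
      have hct : clampIoi t = 0 := by
        rw [clampIoi, max_eq_left (by linarith), min_eq_right (by norm_num)]
      have hgn := hgrid n (le_refl n)
      rw [show ((n:ℕ):ℝ)/(n:ℝ) = 1 by field_simp] at hgn
      rw [show clampIoi 1 = 0 by norm_num [clampIoi]] at hgn
      rw [show K * 0 * L = 0 by ring, Real.sqrt_zero] at hgn
      have hmono : G t ≤ G 1 := hGanti 1 t ht1
      have h1 : |G t - clampIoi t| = G t := by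
        rw [hct, sub_zero, abs_of_nonneg (hG0 t)]
      have h2 : G 1 ≤ K * L := by
        rw [show G 1 - 0 = G 1 by ring, abs_of_nonneg (hG0 1)] at hgn
        linarith
      have h5 : K * L ≤ M := by rw [hM]; nlinarith
      have h6 : 0 ≤ Real.sqrt (M * clampIoi t) := Real.sqrt_nonneg _
      linarith
    · -- 0 ≤ t < 1
      set k : ℕ := ⌊(n:ℝ) * t⌋₊ with hk
      have hkle : (k:ℝ) ≤ (n:ℝ) * t := Nat.floor_le (by positivity)
      have hklt : (n:ℝ) * t < (k:ℝ) + 1 := Nat.lt_floor_add_one _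
      have hkn : k + 1 ≤ n := by
        have : (k:ℝ) < n := lt_of_le_of_lt hkle (by nlinarith)
        exact_mod_cast Nat.succ_le_of_lt (by exact_mod_cast this)
      have hgl : (k:ℝ)/n ≤ t := by rw [div_le_iff₀ hn0]; linarith
      have hgu : t ≤ ((k:ℝ)+1)/n := by rw [le_div_iff₀ hn0]; linarith
      have hk1n : ((k:ℝ)+1)/n ≤ 1 := by
        rw [div_le_one hn0]; exact_mod_cast hkn
      have hkn0 : (0:ℝ) ≤ (k:ℝ)/n := by positivity
      have hq1 : clampIoi ((k:ℝ)/n) = 1 - (k:ℝ)/n := clampIoi_of_mem hkn0 (le_trans hgl ht1.le)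
      have hq2 : clampIoi (((k:ℝ)+1)/n) = 1 - ((k:ℝ)+1)/n := clampIoi_of_mem (by positivity) hk1n
      have hp : clampIoi t = 1 - t := clampIoi_of_mem ht (le_of_lt ht1)
      set p := 1 - t with hpdef
      have hp0 : 0 ≤ p := by rw [hpdef]; linarith
      have hp1 : p ≤ 1 := by rw [hpdef]; linarith
      -- grid bounds
      have hgk := hgrid k (by omega)
      have hgk1 := hgrid (k+1) hkn
      rw [hq1] at hgk
      rw [show (((k+1:ℕ)):ℝ) = (k:ℝ)+1 by push_cast; ring] at hgk1
      rw [hq2] at hgk1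
      have hdiff : ((k:ℝ)+1)/n - (k:ℝ)/n = 1/n := by field_simp; ring
      -- relations between p and the grid values
      have hr1 : 1 - (k:ℝ)/n ≤ p + 2 * L := by
        have h1 : t - (k:ℝ)/n ≤ 1/n := by
          have := hgu; linarith [hdiff]
        rw [hpdef]; linarith
      have hr2 : 1 - ((k:ℝ)+1)/n ≤ p := by rw [hpdef]; linarith
      have hr3 : p ≤ 1 - (k:ℝ)/n := by rw [hpdef]; linarith
      have hr4 : p - (1 - ((k:ℝ)+1)/n) ≤ 2 * L := by
        have h1 : ((k:ℝ)+1)/n - t ≤ 1/n := by linarith [hdiff]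
        rw [hpdef]; linarith
      have hq20 : 0 ≤ 1 - ((k:ℝ)+1)/n := by linarith
      -- sqrt comparisons
      have hmul1 : K * L * (1 - (k:ℝ)/n) ≤ K * L * (p + 2 * L) :=
        mul_le_mul_of_nonneg_left hr1 hKL.le
      have hsq1 : Real.sqrt (K * (1 - (k:ℝ)/n) * L) ≤ Real.sqrt (K * p * L) + 2 * (K * L) := by
        calc Real.sqrt (K * (1 - (k:ℝ)/n) * L) ≤ Real.sqrt (K * p * L + 2 * K * L * L) := by
              apply Real.sqrt_le_sqrt; nlinarith [hmul1]
          _ ≤ Real.sqrt (K * p * L) + Real.sqrt (2 * K * L * L) := by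
              apply sqrt_add_le _ _ (by positivity) (by positivity)
          _ ≤ Real.sqrt (K * p * L) + 2 * (K * L) := by
              have heq : Real.sqrt (2 * K * L * L) = Real.sqrt (2 * K) * L := by
                rw [show 2 * K * L * L = (2 * K) * L ^ 2 by ring, Real.sqrt_mul (by positivity),
                  Real.sqrt_sq hL.le]
              rw [heq]
              have h2K : Real.sqrt (2 * K) ≤ 2 * K := by
                calc Real.sqrt (2 * K) ≤ Real.sqrt ((2*K) * (2*K)) := by
                      apply Real.sqrt_le_sqrt; nlinarith
                  _ = 2 * K := Real.sqrt_mul_self (by linarith)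
              nlinarith
      have hmul2 : K * L * (1 - ((k:ℝ)+1)/n) ≤ K * L * p :=
        mul_le_mul_of_nonneg_left hr2 hKL.le
      have hsq2 : Real.sqrt (K * (1 - ((k:ℝ)+1)/n) * L) ≤ Real.sqrt (K * p * L) := by
        apply Real.sqrt_le_sqrt; nlinarith [hmul2]
      have hsqMp : Real.sqrt (K * p * L) ≤ Real.sqrt (M * p) := by
        apply Real.sqrt_le_sqrt; rw [hM]; nlinarith [mul_nonneg hKL.le hp0]
      -- monotonicity
      have hmu : G t ≤ G ((k:ℝ)/n) := hGanti _ _ hgl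
      have hml : G (((k:ℝ)+1)/n) ≤ G t := hGanti _ _ hgu
      have habs1 := abs_le.mp hgk
      have habs2 := abs_le.mp hgk1
      rw [hp]
      rw [abs_le]
      have hsMp0 : 0 ≤ Real.sqrt (M * p) := Real.sqrt_nonneg _
      constructor
      · linarith [habs2.1, hsq2, hsqMp, hr4, hml]
      · linarith [habs1.2, hsq1, hsqMp, hr3, hr1, hmu]
  -- now apply sqrt_dev
  have hfin := sqrt_dev (hG0 t) (clampIoi_mem t).1 hM0 key
  have hsM : Real.sqrt M = 2 * Real.sqrt (K * L) := by
    rw [hM, show (4:ℝ) * (K*L) = 2^2 * (K*L) by ring, Real.sqrt_mul (by norm_num),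
      Real.sqrt_sq (by norm_num)]
  rw [hsM] at hfin
  linarith

lemma empDistR_isProb {n : ℕ} (hn : n ≠ 0) (V : Fin n → ℝ) :
    IsProbabilityMeasure (empDistR n V) := by
  constructor
  rw [empDistR, Measure.smul_apply, Measure.coe_finset_sum, Finset.sum_apply, smul_eq_mul]
  have : ∀ i : Fin n, Measure.dirac (V i) Set.univ = 1 := fun i => by simp
  rw [Finset.sum_congr rfl (fun i _ => this i), Finset.sum_const, Finset.card_univ,
    Fintype.card_fin, nsmul_eq_mul, mul_one]
  exact ENNReal.inv_mul_cancel (by exact_mod_cast hn) (by simp)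

lemma unif01_Ioi_toReal (t : ℝ) : (unif01 (Set.Ioi t)).toReal = clampIoi t := by
  rw [unif01_Ioi, ENNReal.toReal_ofReal', clampIoi]
  simp only [min_def, max_def]
  split_ifs <;> linarith

lemma unif01_Iio_toReal (t : ℝ) : (unif01 (Set.Iio t)).toReal = clampIoi (1 - t) := by
  rw [unif01_Iio, ENNReal.toReal_ofReal', clampIoi]
  rw [show (1:ℝ) - (1 - t) = t by ring]
  simp only [min_def, max_def]
  split_ifs <;> linarith

open ProbabilityTheory in
lemma tail_pair {Ω : Type} [MeasurableSpace Ω] {μ : MeasureTheory.Measure Ω}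
    [MeasureTheory.IsProbabilityMeasure μ]
    {n : ℕ} {U : Fin n → Ω → ℝ} (hUm : ∀ i, Measurable (U i))
    (hind : iIndepFun U μ)
    {A : Set ℝ} (hA : MeasurableSet A) {p K L : ℝ}
    (hp : ∀ i, (μ (U i ⁻¹' A)).toReal = p) (hp0 : 0 ≤ p) (hp1 : p ≤ 1)
    (hL : 0 < L) (hK : 1 ≤ K) :
    μ {ω | (n:ℝ) * (p + (Real.sqrt (K*p*L) + K*L))
        ≤ ∑ i : Fin n, A.indicator (fun _ => (1:ℝ)) (U i ω)}
      ≤ ENNReal.ofReal (Real.exp (-(K/8) * ((n:ℝ)*L))) ∧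
    μ {ω | (∑ i : Fin n, A.indicator (fun _ => (1:ℝ)) (U i ω) : ℝ)
        ≤ (n:ℝ) * (p - (Real.sqrt (K*p*L) + K*L))}
      ≤ ENNReal.ofReal (Real.exp (-(K/8) * ((n:ℝ)*L))) := by
  obtain ⟨lam, hl0, hl1, hexp⟩ := choose_lam n hL hK hp0 hp1
  constructor
  · rw [ENNReal.le_ofReal_iff_toReal_le (MeasureTheory.measure_ne_top _ _) (Real.exp_nonneg _)]
    exact (chernoff_upper hA hUm hind hp hp0 hp1 hl0 hl1).trans (Real.exp_le_exp.mpr hexp)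
  · rw [ENNReal.le_ofReal_iff_toReal_le (MeasureTheory.measure_ne_top _ _) (Real.exp_nonneg _)]
    exact (chernoff_lower hA hUm hind hp hp0 hp1 hl0).trans (Real.exp_le_exp.mpr hexp)


open MeasureTheory ProbabilityTheory in
set_option maxHeartbeats 2000000 in
open ProbabilityTheory in
/-- high-probability bound for `Δ_CDF` of the uniform empirical
distribution. -/
theorem stmt13 (c : ℝ) (hc : 0 < c) :
    ∃ c' : ℝ, 0 < c' ∧ ∀ n : ℕ, 2 ≤ n →
      ∀ (Ω : Type) (_ : MeasurableSpace Ω) (μ : Measure Ω), IsProbabilityMeasure μ →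
      ∀ U : Fin n → Ω → ℝ, (∀ i, Measurable (U i)) →
        iIndepFun U μ →
        (∀ i, μ.map (U i) = unif01) →
        1 - (n : ℝ≥0∞) ^ (-c) ≤
          μ {ω : Ω | DeltaCDF (empDistR n (fun i => U i ω)) unif01
            ≤ c' * Real.sqrt (Real.log n / n)} := by
  have hc4 : (0:ℝ) < c + 4 := by linarith
  set K : ℝ := 8 * (c + 4) with hKdef
  have hK1 : (1:ℝ) ≤ K := by rw [hKdef]; linarith
  have hK4 : (4:ℝ) ≤ K := by rw [hKdef]; linarith
  have hK0 : (0:ℝ) < K := by linarith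
  refine ⟨4 * Real.sqrt K, by positivity, ?_⟩
  intro n hn Ω mΩ μ hμ U hUm hind hmap
  haveI := hμ
  have hnnat : (0:ℕ) < n := by omega
  have hn0R : (0:ℝ) < n := by exact_mod_cast hnnat
  have hn2R : (2:ℝ) ≤ n := by exact_mod_cast hn
  have hn1R : (1:ℝ) < n := by linarith
  set L : ℝ := Real.log n / n with hLdef
  have hlog : 0 < Real.log n := Real.log_pos hn1R
  have hL0 : 0 < L := by rw [hLdef]; positivity
  have hnL : (n:ℝ) * L = Real.log n := by rw [hLdef]; field_simp
  have hlog2 : (1:ℝ)/2 ≤ Real.log n := by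
    have h2 : Real.log 2 ≤ Real.log n := Real.log_le_log (by norm_num) hn2R
    have := Real.log_two_gt_d9
    linarith
  have h1n : 1 / (n:ℝ) ≤ 2 * L := by
    rw [hLdef, div_le_iff₀ hn0R, mul_comm, ← mul_assoc]
    rw [show (n:ℝ) * 2 * (Real.log n / n) = 2 * Real.log n * (n / n) by ring, div_self hn0R.ne',
      mul_one]
    linarith
  -- sums of indicators
  set SI : ℕ → Ω → ℝ :=
    fun k ω => ∑ i : Fin n, (Set.Ioi ((k:ℝ)/n)).indicator (fun _ => (1:ℝ)) (U i ω) with hSI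
  set SJ : ℕ → Ω → ℝ :=
    fun k ω => ∑ i : Fin n, (Set.Iio ((k:ℝ)/n)).indicator (fun _ => (1:ℝ)) (U i ω) with hSJ
  set pI : ℕ → ℝ := fun k => clampIoi ((k:ℝ)/n) with hpI
  set pJ : ℕ → ℝ := fun k => clampIoi (1 - (k:ℝ)/n) with hpJ
  -- the bad event
  set Bad : Set Ω := ⋃ k ∈ Finset.range (n+1),
      (({ω | (n:ℝ) * (pI k + (Real.sqrt (K * pI k * L) + K * L)) ≤ SI k ω} ∪
        {ω | SI k ω ≤ (n:ℝ) * (pI k - (Real.sqrt (K * pI k * L) + K * L))}) ∪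
       ({ω | (n:ℝ) * (pJ k + (Real.sqrt (K * pJ k * L) + K * L)) ≤ SJ k ω} ∪
        {ω | SJ k ω ≤ (n:ℝ) * (pJ k - (Real.sqrt (K * pJ k * L) + K * L))})) with hBad
  have hSImeas : ∀ k, Measurable (SI k) := fun k =>
    Finset.measurable_sum _ (fun i _ =>
      ((measurable_const.indicator measurableSet_Ioi).comp (hUm i)))
  have hSJmeas : ∀ k, Measurable (SJ k) := fun k =>
    Finset.measurable_sum _ (fun i _ =>
      ((measurable_const.indicator measurableSet_Iio).comp (hUm i)))
  have hBadMeas : MeasurableSet Bad := by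
    rw [hBad]
    apply MeasurableSet.biUnion (Finset.range (n+1) : Finset ℕ).countable_toSet
    intro k _
    exact ((measurableSet_le measurable_const (hSImeas k)).union
        (measurableSet_le (hSImeas k) measurable_const)).union
      ((measurableSet_le measurable_const (hSJmeas k)).union
        (measurableSet_le (hSJmeas k) measurable_const))
  -- probabilities at grid points
  have hpIeq : ∀ k : ℕ, ∀ i, (μ (U i ⁻¹' (Set.Ioi ((k:ℝ)/n)))).toReal = pI k := by
    intro k i
    rw [← Measure.map_apply (hUm i) measurableSet_Ioi, hmap i, unif01_Ioi_toReal]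
  have hpJeq : ∀ k : ℕ, ∀ i, (μ (U i ⁻¹' (Set.Iio ((k:ℝ)/n)))).toReal = pJ k := by
    intro k i
    rw [← Measure.map_apply (hUm i) measurableSet_Iio, hmap i, unif01_Iio_toReal]
  have heterm : ENNReal.ofReal (Real.exp (-(K/8) * ((n:ℝ)*L)))
      = ENNReal.ofReal ((n:ℝ) ^ (-(c+4))) := by
    rw [hnL, Real.rpow_def_of_pos hn0R]
    congr 1
    rw [hKdef]; ring
  -- union bound
  have hBadLe : μ Bad ≤ (n:ℝ≥0∞) ^ (-c) := by
    have hterm : ∀ k ∈ Finset.range (n+1),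
        μ (({ω | (n:ℝ) * (pI k + (Real.sqrt (K * pI k * L) + K * L)) ≤ SI k ω} ∪
        {ω | SI k ω ≤ (n:ℝ) * (pI k - (Real.sqrt (K * pI k * L) + K * L))}) ∪
       ({ω | (n:ℝ) * (pJ k + (Real.sqrt (K * pJ k * L) + K * L)) ≤ SJ k ω} ∪
        {ω | SJ k ω ≤ (n:ℝ) * (pJ k - (Real.sqrt (K * pJ k * L) + K * L))}))
        ≤ 4 * ENNReal.ofReal ((n:ℝ) ^ (-(c+4))) := by
      intro k _
      have hI := tail_pair hUm hind measurableSet_Ioi (hpIeq k)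
        (clampIoi_mem _).1 (clampIoi_mem _).2 hL0 hK1
      have hJ := tail_pair hUm hind measurableSet_Iio (hpJeq k)
        (clampIoi_mem _).1 (clampIoi_mem _).2 hL0 hK1
      rw [heterm] at hI hJ
      calc μ _ ≤ μ ({ω | (n:ℝ) * (pI k + (Real.sqrt (K * pI k * L) + K * L)) ≤ SI k ω} ∪
            {ω | SI k ω ≤ (n:ℝ) * (pI k - (Real.sqrt (K * pI k * L) + K * L))}) +
            μ ({ω | (n:ℝ) * (pJ k + (Real.sqrt (K * pJ k * L) + K * L)) ≤ SJ k ω} ∪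
            {ω | SJ k ω ≤ (n:ℝ) * (pJ k - (Real.sqrt (K * pJ k * L) + K * L))}) :=
          measure_union_le _ _
        _ ≤ (μ {ω | (n:ℝ) * (pI k + (Real.sqrt (K * pI k * L) + K * L)) ≤ SI k ω} +
            μ {ω | SI k ω ≤ (n:ℝ) * (pI k - (Real.sqrt (K * pI k * L) + K * L))}) +
            (μ {ω | (n:ℝ) * (pJ k + (Real.sqrt (K * pJ k * L) + K * L)) ≤ SJ k ω} +
            μ {ω | SJ k ω ≤ (n:ℝ) * (pJ k - (Real.sqrt (K * pJ k * L) + K * L))}) :=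
          add_le_add (measure_union_le _ _) (measure_union_le _ _)
        _ ≤ (ENNReal.ofReal ((n:ℝ) ^ (-(c+4))) + ENNReal.ofReal ((n:ℝ) ^ (-(c+4)))) +
            (ENNReal.ofReal ((n:ℝ) ^ (-(c+4))) + ENNReal.ofReal ((n:ℝ) ^ (-(c+4)))) :=
          add_le_add (add_le_add hI.1 hI.2) (add_le_add hJ.1 hJ.2)
        _ = 4 * ENNReal.ofReal ((n:ℝ) ^ (-(c+4))) := by ring
    calc μ Bad ≤ ∑ k ∈ Finset.range (n+1),
        μ (({ω | (n:ℝ) * (pI k + (Real.sqrt (K * pI k * L) + K * L)) ≤ SI k ω} ∪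
        {ω | SI k ω ≤ (n:ℝ) * (pI k - (Real.sqrt (K * pI k * L) + K * L))}) ∪
       ({ω | (n:ℝ) * (pJ k + (Real.sqrt (K * pJ k * L) + K * L)) ≤ SJ k ω} ∪
        {ω | SJ k ω ≤ (n:ℝ) * (pJ k - (Real.sqrt (K * pJ k * L) + K * L))})) := by
          rw [hBad]; exact measure_biUnion_finset_le _ _
      _ ≤ ∑ _k ∈ Finset.range (n+1), 4 * ENNReal.ofReal ((n:ℝ) ^ (-(c+4))) :=
          Finset.sum_le_sum hterm
      _ = ((n+1:ℕ) : ℝ≥0∞) * (4 * ENNReal.ofReal ((n:ℝ) ^ (-(c+4)))) := by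
          rw [Finset.sum_const, Finset.card_range, nsmul_eq_mul]
      _ = ENNReal.ofReal (((n:ℝ)+1) * (4 * (n:ℝ) ^ (-(c+4)))) := by
          rw [ENNReal.ofReal_mul (by positivity), ENNReal.ofReal_mul (by norm_num)]
          congr 1
          · rw [← ENNReal.ofReal_natCast]; congr 1; push_cast; ring
          · congr 1; norm_num
      _ ≤ ENNReal.ofReal ((n:ℝ) ^ (-c)) := by
          apply ENNReal.ofReal_le_ofReal
          have h4n : ((n:ℝ)+1) * 4 ≤ (n:ℝ) ^ (4:ℕ) := by
            have h8 : (8:ℝ) ≤ (n:ℝ)^3 := by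
              calc (8:ℝ) = 2^3 := by norm_num
                _ ≤ (n:ℝ)^3 := pow_le_pow_left₀ (by norm_num) hn2R 3
            nlinarith [mul_le_mul_of_nonneg_right h8 hn0R.le]
          have hsplit : (n:ℝ) ^ (-c) = (n:ℝ) ^ (4:ℕ) * (n:ℝ) ^ (-(c+4)) := by
            rw [← Real.rpow_natCast (n:ℝ) 4, ← Real.rpow_add hn0R]
            congr 1; push_cast; ring
          rw [hsplit, ← mul_assoc]
          apply mul_le_mul_of_nonneg_right h4n (Real.rpow_nonneg hn0R.le _)
      _ = (n:ℝ≥0∞) ^ (-c) := by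
          rw [← ENNReal.ofReal_rpow_of_pos hn0R, ENNReal.ofReal_natCast]
  -- subset of good event
  have hsub : Badᶜ ⊆ {ω : Ω | DeltaCDF (empDistR n (fun i => U i ω)) unif01
      ≤ 4 * Real.sqrt K * Real.sqrt L} := by
    intro ω hω
    rw [Set.mem_compl_iff, hBad, Set.mem_iUnion₂] at hω
    push_neg at hω
    -- extract grid hypotheses
    have hgridI : ∀ k : ℕ, k ≤ n →
        |SI k ω / n - pI k| ≤ Real.sqrt (K * pI k * L) + K * L := by
      intro k hk
      have h := hω k (Finset.mem_range.mpr (by omega))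
      simp only [Set.mem_union, Set.mem_setOf_eq, not_or, not_le] at h
      obtain ⟨⟨h1, h2⟩, _⟩ := h
      have hdiv1 : SI k ω / n < pI k + (Real.sqrt (K * pI k * L) + K * L) := by
        rw [div_lt_iff₀ hn0R]; linarith
      have hdiv2 : pI k - (Real.sqrt (K * pI k * L) + K * L) < SI k ω / n := by
        rw [lt_div_iff₀ hn0R]; linarith
      rw [abs_le]
      constructor <;> linarith
    have hgridJ : ∀ k : ℕ, k ≤ n →
        |SJ k ω / n - pJ k| ≤ Real.sqrt (K * pJ k * L) + K * L := by
      intro k hk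
      have h := hω k (Finset.mem_range.mpr (by omega))
      simp only [Set.mem_union, Set.mem_setOf_eq, not_or, not_le] at h
      obtain ⟨_, h3, h4⟩ := h
      have hdiv1 : SJ k ω / n < pJ k + (Real.sqrt (K * pJ k * L) + K * L) := by
        rw [div_lt_iff₀ hn0R]; linarith
      have hdiv2 : pJ k - (Real.sqrt (K * pJ k * L) + K * L) < SJ k ω / n := by
        rw [lt_div_iff₀ hn0R]; linarith
      rw [abs_le]
      constructor <;> linarith
    -- the empirical measure for this ω
    haveI hPM : IsProbabilityMeasure (empDistR n (fun i => U i ω)) :=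
      empDistR_isProb (by omega) _
    set P := empDistR n (fun i => U i ω) with hPdef
    have htoReal_le_one : ∀ s : Set ℝ, (P s).toReal ≤ 1 := by
      intro s
      have h1 := prob_le_one (μ := P) (s := s)
      have := ENNReal.toReal_mono (by simp) h1
      simpa using this
    -- Ioi side via lemB
    have hGanti : ∀ s t : ℝ, s ≤ t → (P (Set.Ioi t)).toReal ≤ (P (Set.Ioi s)).toReal :=
      fun s t hst => ENNReal.toReal_mono (measure_ne_top _ _)
        (measure_mono (Set.Ioi_subset_Ioi hst))
    have hGeq : ∀ k : ℕ, (P (Set.Ioi ((k:ℝ)/n))).toReal = SI k ω / n := by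
      intro k
      rw [hPdef]
      exact empDistR_apply hnnat _ measurableSet_Ioi
    have hGgrid : ∀ k : ℕ, k ≤ n →
        |(P (Set.Ioi ((k:ℝ)/n))).toReal - clampIoi ((k:ℝ)/n)|
          ≤ Real.sqrt (K * clampIoi ((k:ℝ)/n) * L) + K * L := by
      intro k hk
      rw [hGeq k]
      exact hgridI k hk
    have hIoiAll := lemB hn hK4 hL0 h1n (fun t => (P (Set.Ioi t)).toReal)
      hGanti (fun t => ENNReal.toReal_nonneg) (fun t => htoReal_le_one _) hGgrid
    -- Iio side via lemB applied to the reflected function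
    have hFanti : ∀ s t : ℝ, s ≤ t →
        (P (Set.Iio (1 - t))).toReal ≤ (P (Set.Iio (1 - s))).toReal :=
      fun s t hst => ENNReal.toReal_mono (measure_ne_top _ _)
        (measure_mono (Set.Iio_subset_Iio (by linarith)))
    have hFgrid : ∀ k : ℕ, k ≤ n →
        |(P (Set.Iio (1 - (k:ℝ)/n))).toReal - clampIoi ((k:ℝ)/n)|
          ≤ Real.sqrt (K * clampIoi ((k:ℝ)/n) * L) + K * L := by
      intro k hk
      have hcast : (((n - k : ℕ)):ℝ) = (n:ℝ) - k := by
        rw [Nat.cast_sub hk]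
      have harg : 1 - (k:ℝ)/n = (((n - k : ℕ)):ℝ)/n := by
        rw [hcast]
        field_simp
      have hpJval : pJ (n - k) = clampIoi ((k:ℝ)/n) := by
        have harg2 : (1 : ℝ) - (((n - k : ℕ)):ℝ)/n = (k:ℝ)/n := by
          rw [hcast]; field_simp; ring
        show clampIoi (1 - (((n - k : ℕ)):ℝ)/n) = clampIoi ((k:ℝ)/n)
        rw [harg2]
      have hFeq : (P (Set.Iio ((((n - k : ℕ)):ℝ)/n))).toReal = SJ (n - k) ω / n := by
        rw [hPdef]
        exact empDistR_apply hnnat _ measurableSet_Iio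
      rw [harg, hFeq, ← hpJval]
      exact hgridJ (n - k) (by omega)
    have hIioAll := lemB hn hK4 hL0 h1n (fun t => (P (Set.Iio (1 - t))).toReal)
      hFanti (fun t => ENNReal.toReal_nonneg) (fun t => htoReal_le_one _) hFgrid
    -- conclude
    have hKLsplit : 4 * Real.sqrt (K * L) = 4 * Real.sqrt K * Real.sqrt L := by
      rw [Real.sqrt_mul hK0.le, mul_assoc]
    rw [Set.mem_setOf_eq, DeltaCDF]
    apply max_le
    · apply ciSup_le
      intro t
      have h := hIoiAll t
      rw [unif01_Ioi_toReal t]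
      rw [hKLsplit] at h
      exact h
    · apply ciSup_le
      intro t
      rw [unif01_Iio_toReal t, ← hKLsplit]
      calc |Real.sqrt (P (Set.Iio t)).toReal - Real.sqrt (clampIoi (1 - t))|
          = |Real.sqrt (P (Set.Iio (1 - (1 - t)))).toReal - Real.sqrt (clampIoi (1 - t))| := by
            rw [show (1:ℝ) - (1 - t) = t by ring]
        _ ≤ 4 * Real.sqrt (K * L) := hIioAll (1 - t)
  calc 1 - (n:ℝ≥0∞) ^ (-c) ≤ 1 - μ Bad := tsub_le_tsub_left hBadLe 1
    _ = μ Badᶜ := (prob_compl_eq_one_sub hBadMeas).symm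
    _ ≤ _ := measure_mono hsub


end
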